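/- arXiv:1201.3258 — 2 statements merged into one kernel-verified Lean document; each statement's English description precedes it below -/
import Mathlib

section
/- Let e₀(t,r) := −∂ₜ²u₀(t,r). There exist a real constant c_ν and a smooth function e₀*(t,r) such that t² e₀(t,r) = c_ν λ(t)^{1/2} ⟨λ(t)r⟩^{−1} + t² e₀*(t,r) for all t > 0, r ≥ 0, and for every k, ℓ ∈ ℕ₀ and every t₀ > 0 there is a constant C_{k,ℓ} such that |∂ₜ^ℓ ∂ᵣ^k (t² e₀*(t,r))| ≤ C_{k,ℓ} λ(t)^{1/2+k+ℓ} (λ(t)t)^{−ℓ} ⟨λ(t)r⟩^{−3−k} for all t ≥ t₀ and r ≥ 0. Moreover, all odd-order r-derivatives of e₀(t,·) and of e₀*(t,·) vanish at r = 0. -/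
noncomputable section

open Real

/-- Japanese bracket `⟨x⟩ = (1+x²)^{1/2}`. -/
def jap (x : ℝ) : ℝ := Real.sqrt (1 + x ^ 2)

/-- The scaling factor `λ(t) = t^{-(1-ν)}`. -/
def lam (ν t : ℝ) : ℝ := t ^ (ν - 1)

/-- The ground state `W(R) = (1+R²/3)^{-1/2}`. -/
def W (R : ℝ) : ℝ := (Real.sqrt (1 + R ^ 2 / 3))⁻¹

/-- The rescaled soliton `u₀(t,r) = λ(t)^{1/2} W(λ(t)r)`. -/
def u0 (ν t r : ℝ) : ℝ := lam ν t ^ ((1 : ℝ) / 2) * W (lam ν t * r)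

/-- The first error `e₀ = -∂ₜ²u₀`. -/
def e0 (ν t r : ℝ) : ℝ := - iteratedDeriv 2 (fun s => u0 ν s r) t

namespace E0aux


/-- `(s+x²)^{-q/2}` -/
def pw (s : ℝ) (q : ℕ) (x : ℝ) : ℝ := (s + x ^ 2) ^ (-(q : ℝ) / 2)

lemma base_pos {s : ℝ} (hs : 0 < s) (x : ℝ) : 0 < s + x ^ 2 := by positivity

lemma pw_pos {s : ℝ} (hs : 0 < s) (q : ℕ) (x : ℝ) : 0 < pw s q x :=
  Real.rpow_pos_of_pos (base_pos hs x) _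

lemma contDiff_pw {s : ℝ} (hs : 0 < s) (q : ℕ) : ContDiff ℝ (⊤ : ℕ∞) (pw s q) := by
  rw [contDiff_iff_contDiffAt]
  intro x
  exact ContDiffAt.rpow_const_of_ne
    ((contDiffAt_const.add (contDiffAt_id.pow 2)) : ContDiffAt ℝ (⊤ : ℕ∞) (fun x : ℝ => s + x ^ 2) x)
    (ne_of_gt (base_pos hs x))

lemma pw_hasDerivAt {s : ℝ} (hs : 0 < s) (q : ℕ) (x : ℝ) :
    HasDerivAt (pw s q) (-(q : ℝ) * (x * pw s (q + 2) x)) x := by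
  have h1 : HasDerivAt (fun x : ℝ => s + x ^ 2) (2 * x) x := by
    simpa using ((hasDerivAt_pow 2 x).const_add s)
  have h2 := h1.rpow_const (p := -(q : ℝ) / 2) (Or.inl (ne_of_gt (base_pos hs x)))
  have he : (-(q : ℝ) / 2 - 1) = -((q : ℕ) + 2 : ℕ) / 2 := by push_cast; ring
  refine h2.congr_deriv ?_
  rw [pw, ← he]
  ring

lemma pw_deriv {s : ℝ} (hs : 0 < s) (q : ℕ) :
    deriv (pw s q) = fun x => -(q : ℝ) * (x * pw s (q + 2) x) := by
  funext x; exact (pw_hasDerivAt hs q x).deriv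

lemma pw_le {s : ℝ} (hs : 1 ≤ s) (q : ℕ) (x : ℝ) :
    pw s q x ≤ (1 + x ^ 2) ^ ((-(q : ℝ) - 0) / 2) := by
  have h1 : (0:ℝ) < 1 + x ^ 2 := by positivity
  have : ((-(q : ℝ) - 0) / 2) = -(q:ℝ)/2 := by ring
  rw [this]
  have hq : -(q:ℝ)/2 ≤ 0 := by
    have : (0:ℝ) ≤ (q:ℝ)/2 := by positivity
    linarith
  exact Real.rpow_le_rpow_of_nonpos h1 (by nlinarith) hq

/-- difference family -/
def dq (q : ℕ) (x : ℝ) : ℝ := pw 3 q x - pw 1 q x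

lemma contDiff_dq (q : ℕ) : ContDiff ℝ (⊤ : ℕ∞) (dq q) :=
  (contDiff_pw (by norm_num) q).sub (contDiff_pw (by norm_num) q)

lemma dq_hasDerivAt (q : ℕ) (x : ℝ) :
    HasDerivAt (dq q) (-(q : ℝ) * (x * dq (q + 2) x)) x := by
  have := (pw_hasDerivAt (by norm_num : (0:ℝ) < 3) q x).sub
    (pw_hasDerivAt (by norm_num : (0:ℝ) < 1) q x)
  refine this.congr_deriv ?_
  rw [dq]; ring

lemma dq_deriv (q : ℕ) :
    deriv (dq q) = fun x => -(q : ℝ) * (x * dq (q + 2) x) := by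
  funext x; exact (dq_hasDerivAt q x).deriv

lemma dq_le (q : ℕ) (x : ℝ) :
    |dq q x| ≤ (q : ℝ) * (1 + x ^ 2) ^ ((-(q : ℝ) - 2) / 2) := by
  have h1 : (0:ℝ) < 1 + x ^ 2 := by positivity
  have hab : (1 : ℝ) + x ^ 2 < 3 + x ^ 2 := by linarith
  -- MVT for f y = y ^ (-(q)/2) on [1+x², 3+x²]
  set f : ℝ → ℝ := fun y => y ^ (-(q : ℝ) / 2) with hf
  set f' : ℝ → ℝ := fun y => (-(q : ℝ) / 2) * y ^ (-(q : ℝ) / 2 - 1) with hf'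
  have hcont : ContinuousOn f (Set.Icc (1 + x ^ 2) (3 + x ^ 2)) := by
    intro y hy
    have hy0 : y ≠ 0 := by have := hy.1; intro h; rw [h] at this; linarith
    exact (Real.continuousAt_rpow_const y _ (Or.inl hy0)).continuousWithinAt
  have hder : ∀ y ∈ Set.Ioo (1 + x ^ 2) (3 + x ^ 2), HasDerivAt f (f' y) y := by
    intro y hy
    have hy0 : y ≠ 0 := by have := hy.1; intro h; rw [h] at this; linarith
    simpa [hf', mul_comm] using (Real.hasDerivAt_rpow_const (p := -(q:ℝ)/2) (Or.inl hy0))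
  obtain ⟨ξ, hξ, hslope⟩ := exists_hasDerivAt_eq_slope f f' hab hcont hder
  have hdq : dq q x = 2 * f' ξ := by
    have h2 : (3 + x ^ 2) - (1 + x ^ 2) = (2:ℝ) := by ring
    have := hslope
    rw [h2] at this
    have : f (3 + x ^ 2) - f (1 + x ^ 2) = 2 * f' ξ := by
      field_simp at this ⊢; linarith
    simpa [dq, pw, hf] using this
  have hξ1 : 1 + x ^ 2 ≤ ξ := le_of_lt hξ.1
  have hbnd : |f' ξ| ≤ (q : ℝ) / 2 * (1 + x ^ 2) ^ ((-(q : ℝ) - 2) / 2) := by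
    have hξpos : 0 < ξ := lt_of_lt_of_le h1 hξ1
    have hexp : -(q : ℝ) / 2 - 1 ≤ 0 := by
      have : (0:ℝ) ≤ (q:ℝ)/2 := by positivity
      linarith
    have h3 : ξ ^ (-(q : ℝ) / 2 - 1) ≤ (1 + x ^ 2) ^ (-(q : ℝ) / 2 - 1) :=
      Real.rpow_le_rpow_of_nonpos h1 hξ1 hexp
    have habs : |f' ξ| = (q : ℝ) / 2 * ξ ^ (-(q : ℝ) / 2 - 1) := by
      rw [hf']
      rw [abs_mul, abs_of_nonneg (le_of_lt (Real.rpow_pos_of_pos hξpos _))]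
      congr 1
      rw [abs_div, abs_neg, Nat.abs_cast]
      simp
    rw [habs]
    have hee : (-(q : ℝ) - 2) / 2 = -(q : ℝ) / 2 - 1 := by ring
    rw [hee]
    have hq2 : (0:ℝ) ≤ (q:ℝ)/2 := by positivity
    nlinarith [Real.rpow_pos_of_pos h1 (-(q : ℝ) / 2 - 1)]
  calc |dq q x| = 2 * |f' ξ| := by rw [hdq, abs_mul]; simp
    _ ≤ 2 * ((q : ℝ) / 2 * (1 + x ^ 2) ^ ((-(q : ℝ) - 2) / 2)) := by
        have : (0:ℝ) ≤ 2 := by norm_num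
        exact mul_le_mul_of_nonneg_left hbnd this
    _ = (q : ℝ) * (1 + x ^ 2) ^ ((-(q : ℝ) - 2) / 2) := by ring



lemma diff_iter (h : ℝ → ℝ) (hh : ContDiff ℝ (⊤ : ℕ∞) h) (n : ℕ) :
    Differentiable ℝ (iteratedDeriv n h) := by
  apply hh.differentiable_iteratedDeriv
  exact_mod_cast lt_of_lt_of_le (WithTop.coe_lt_top _) le_rfl

lemma deriv_iter (h : ℝ → ℝ) (n : ℕ) :
    deriv (iteratedDeriv n h) = iteratedDeriv (n + 1) h := (iteratedDeriv_succ).symm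

lemma iteratedDeriv_id_mul (h : ℝ → ℝ) (hh : ContDiff ℝ (⊤ : ℕ∞) h) (m : ℕ) :
    iteratedDeriv (m + 1) (fun x => x * h x)
      = fun x => x * iteratedDeriv (m + 1) h x + ((m : ℝ) + 1) * iteratedDeriv m h x := by
  induction m with
  | zero =>
    funext x
    rw [iteratedDeriv_one]
    have h1 : HasDerivAt (fun x => x * h x) (1 * h x + x * deriv h x) x :=
      (hasDerivAt_id x).mul ((hh.differentiable (by simp)).differentiableAt).hasDerivAt
    rw [h1.deriv]
    simp [iteratedDeriv_one, iteratedDeriv_zero]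
    ring
  | succ m ih =>
    funext x
    rw [iteratedDeriv_succ, ih]
    have hd1 : DifferentiableAt ℝ (fun x => x * iteratedDeriv (m + 1) h x) x :=
      (differentiableAt_fun_id).mul ((diff_iter h hh (m + 1)) x)
    have hd2 : DifferentiableAt ℝ (fun x => ((m : ℝ) + 1) * iteratedDeriv m h x) x :=
      ((diff_iter h hh m) x).const_mul _
    rw [deriv_fun_add hd1 hd2]
    have e1 : HasDerivAt (fun x => x * iteratedDeriv (m + 1) h x)
        (1 * iteratedDeriv (m + 1) h x + x * iteratedDeriv (m + 2) h x) x := by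
      have := (hasDerivAt_id x).mul ((diff_iter h hh (m + 1)) x).hasDerivAt
      rwa [deriv_iter h (m+1)] at this
    have e2 : deriv (fun x => ((m : ℝ) + 1) * iteratedDeriv m h x) x
        = ((m : ℝ) + 1) * iteratedDeriv (m + 1) h x := by
      rw [deriv_const_mul _ ((diff_iter h hh m) x), deriv_iter h m]
    rw [e1.deriv, e2]
    push_cast
    ring

lemma iteratedDeriv_cmul (h : ℝ → ℝ) (hh : ContDiff ℝ (⊤ : ℕ∞) h) (c : ℝ) (n : ℕ) (x : ℝ) :
    iteratedDeriv n (fun x => c * h x) x = c * iteratedDeriv n h x := by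
  rw [← iteratedDerivWithin_univ, ← iteratedDerivWithin_univ]
  exact iteratedDerivWithin_const_mul (Set.mem_univ x) uniqueDiffOn_univ c
    ((hh.of_le (by exact_mod_cast le_top)).contDiffWithinAt)

lemma iteratedDeriv_add' (f g : ℝ → ℝ) (hf : ContDiff ℝ (⊤ : ℕ∞) f) (hg : ContDiff ℝ (⊤ : ℕ∞) g) (n : ℕ)
    (x : ℝ) :
    iteratedDeriv n (fun x => f x + g x) x = iteratedDeriv n f x + iteratedDeriv n g x := by
  rw [← iteratedDerivWithin_univ, ← iteratedDerivWithin_univ, ← iteratedDerivWithin_univ]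
  exact iteratedDerivWithin_add (Set.mem_univ x) uniqueDiffOn_univ
    ((hf.of_le (by exact_mod_cast le_top)).contDiffWithinAt) ((hg.of_le (by exact_mod_cast le_top)).contDiffWithinAt)

lemma abs_le_jbr (x : ℝ) : |x| ≤ (1 + x ^ 2) ^ ((1:ℝ)/2) := by
  rw [← Real.sqrt_eq_rpow]
  rw [← Real.sqrt_sq_eq_abs]
  exact Real.sqrt_le_sqrt (by nlinarith)

lemma jbr_mul (x a b : ℝ) :
    (1 + x ^ 2) ^ a * (1 + x ^ 2) ^ b = (1 + x ^ 2) ^ (a + b) := by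
  rw [← Real.rpow_add (by positivity)]

/-- the key inductive symbol estimate for families `g q` with `g q' = -q·x·g (q+2)` -/
lemma sym_family (g : ℕ → ℝ → ℝ) (e : ℝ)
    (hsm : ∀ q, ContDiff ℝ (⊤ : ℕ∞) (g q))
    (hd : ∀ q, deriv (g q) = fun x => -(q : ℝ) * (x * g (q + 2) x))
    (hb : ∀ q, ∃ C, 0 ≤ C ∧ ∀ x, |g q x| ≤ C * (1 + x ^ 2) ^ ((-(q : ℝ) - e) / 2)) :
    ∀ m q, ∃ C, 0 ≤ C ∧ ∀ x,
      |iteratedDeriv m (g q) x| ≤ C * (1 + x ^ 2) ^ ((-(q : ℝ) - e - m) / 2) := by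
  intro m
  induction m using Nat.strong_induction_on with
  | _ m IH =>
    intro q
    match m with
    | 0 =>
      obtain ⟨C, hC0, hC⟩ := hb q
      exact ⟨C, hC0, fun x => by simpa using hC x⟩
    | (m + 1) =>
      -- iteratedDeriv (m+1) (g q) = iteratedDeriv m (deriv (g q))
      have step : ∀ x, iteratedDeriv (m + 1) (g q) x
          = -(q : ℝ) * iteratedDeriv m (fun x => x * g (q + 2) x) x := by
        intro x
        rw [iteratedDeriv_succ']
        rw [hd q]
        exact iteratedDeriv_cmul _ (contDiff_id.mul (hsm (q+2))) _ m x
      match m with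
      | 0 =>
        obtain ⟨C, hC0, hC⟩ := hb (q + 2)
        refine ⟨(q : ℝ) * C, by positivity, fun x => ?_⟩
        rw [step x]
        simp only [iteratedDeriv_zero]
        rw [abs_mul, abs_mul]
        have h1 : |x| * |g (q+2) x| ≤ (1 + x ^ 2) ^ ((1:ℝ)/2) * (C * (1 + x ^ 2) ^ ((-((q:ℝ)+2) - e) / 2)) := by
          apply mul_le_mul (abs_le_jbr x) (by exact_mod_cast hC x) (abs_nonneg _) (by positivity)
        have h2 : (1 + x ^ 2) ^ ((1:ℝ)/2) * (C * (1 + x ^ 2) ^ ((-((q:ℝ)+2) - e) / 2))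
            = C * (1 + x ^ 2) ^ ((-(q : ℝ) - e - 1) / 2) := by
          rw [mul_comm ((1 + x ^ 2) ^ ((1:ℝ)/2)) _, mul_assoc, jbr_mul,
            show (-((q:ℝ)+2) - e) / 2 + (1:ℝ)/2 = (-(q : ℝ) - e - 1) / 2 by ring]
        have h3 : |(-(q:ℝ))| = (q:ℝ) := by
          rw [abs_neg, Nat.abs_cast]
        rw [h3]
        calc (q:ℝ) * (|x| * |g (q+2) x|) ≤ (q:ℝ) * (C * (1 + x ^ 2) ^ ((-(q : ℝ) - e - 1) / 2)) := by
              apply mul_le_mul_of_nonneg_left _ (by positivity)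
              rw [← h2]; exact h1
          _ = (q:ℝ) * C * (1 + x ^ 2) ^ ((-(q : ℝ) - e - (0+1 : ℕ)) / 2) := by norm_num; ring
      | (m + 1) =>
        obtain ⟨C1, hC10, hC1⟩ := IH (m + 1) (by omega) (q + 2)
        obtain ⟨C2, hC20, hC2⟩ := IH m (by omega) (q + 2)
        refine ⟨(q : ℝ) * (C1 + ((m:ℝ)+1) * C2), by positivity, fun x => ?_⟩
        rw [step x, iteratedDeriv_id_mul _ (hsm (q+2)) m]
        rw [abs_mul]
        have h3 : |(-(q:ℝ))| = (q:ℝ) := by rw [abs_neg, Nat.abs_cast]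
        rw [h3]
        have hx1 : |x * iteratedDeriv (m+1) (g (q+2)) x|
            ≤ C1 * (1 + x ^ 2) ^ ((-(q : ℝ) - e - ((m:ℕ)+1+1 : ℕ)) / 2) := by
          rw [abs_mul]
          have h5 := mul_le_mul (abs_le_jbr x) (hC1 x) (abs_nonneg _) (by positivity)
          calc |x| * |iteratedDeriv (m+1) (g (q+2)) x|
              ≤ (1 + x ^ 2) ^ ((1:ℝ)/2) * (C1 * (1 + x ^ 2) ^ ((-((q:ℕ)+2:ℕ) - e - ((m:ℕ)+1:ℕ)) / 2)) := h5
            _ = C1 * (1 + x ^ 2) ^ ((-(q : ℝ) - e - ((m:ℕ)+1+1 : ℕ)) / 2) := by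
                rw [mul_comm ((1 + x ^ 2) ^ ((1:ℝ)/2)) _, mul_assoc, jbr_mul]
                congr 1
                push_cast
                ring
        have hx2 : |((m:ℝ)+1) * iteratedDeriv m (g (q+2)) x|
            ≤ ((m:ℝ)+1) * C2 * (1 + x ^ 2) ^ ((-(q : ℝ) - e - ((m:ℕ)+1+1 : ℕ)) / 2) := by
          rw [abs_mul]
          have h4 : |((m:ℝ)+1)| = ((m:ℝ)+1) := abs_of_nonneg (by positivity)
          rw [h4, mul_assoc]
          apply mul_le_mul_of_nonneg_left _ (by positivity)
          calc |iteratedDeriv m (g (q+2)) x| ≤ C2 * (1 + x ^ 2) ^ ((-((q:ℕ)+2:ℕ) - e - (m:ℕ)) / 2) := hC2 x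
            _ = C2 * (1 + x ^ 2) ^ ((-(q : ℝ) - e - ((m:ℕ)+1+1 : ℕ)) / 2) := by
                congr 1
                push_cast
                ring
        calc (q:ℝ) * |x * iteratedDeriv (m+1) (g (q+2)) x + ((m:ℝ)+1) * iteratedDeriv m (g (q+2)) x|
            ≤ (q:ℝ) * (|x * iteratedDeriv (m+1) (g (q+2)) x| + |((m:ℝ)+1) * iteratedDeriv m (g (q+2)) x|) := by
              apply mul_le_mul_of_nonneg_left (abs_add_le _ _) (by positivity)
          _ ≤ (q:ℝ) * (C1 * (1 + x ^ 2) ^ ((-(q : ℝ) - e - ((m:ℕ)+1+1 : ℕ)) / 2)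
                + ((m:ℝ)+1) * C2 * (1 + x ^ 2) ^ ((-(q : ℝ) - e - ((m:ℕ)+1+1 : ℕ)) / 2)) := by
              apply mul_le_mul_of_nonneg_left (add_le_add hx1 hx2) (by positivity)
          _ = (q:ℝ) * (C1 + ((m:ℝ)+1) * C2) * (1 + x ^ 2) ^ ((-(q : ℝ) - e - ((m:ℕ)+1+1 : ℕ)) / 2) := by
              ring


/-! ### profile functions and coefficients -/

def ccoef (ν : ℝ) : ℝ := -(Real.sqrt 3 / 4) * (2 * (ν - 1) + (ν - 1) ^ 2)
def bcoef (ν : ℝ) : ℝ := 3 * Real.sqrt 3 * ((ν - 1) + 3 * (ν - 1) ^ 2)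
def dcoef (ν : ℝ) : ℝ := -27 * Real.sqrt 3 * (ν - 1) ^ 2

def Gf (ν : ℝ) (x : ℝ) : ℝ := ccoef ν * dq 1 x + bcoef ν * pw 3 3 x + dcoef ν * pw 3 5 x

lemma contDiff_Gf (ν : ℝ) : ContDiff ℝ (⊤ : ℕ∞) (Gf ν) := by
  unfold Gf
  exact ((contDiff_const.mul (contDiff_dq 1)).add
    (contDiff_const.mul (contDiff_pw (by norm_num) 3))).add
    (contDiff_const.mul (contDiff_pw (by norm_num) 5))

lemma Gf_even (ν : ℝ) (x : ℝ) : Gf ν (-x) = Gf ν x := by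
  simp [Gf, dq, pw, neg_sq]

lemma pw_family_bound : ∀ m q, ∃ C, 0 ≤ C ∧ ∀ x,
    |iteratedDeriv m (pw 3 q) x| ≤ C * (1 + x ^ 2) ^ ((-(q : ℝ) - 0 - m) / 2) := by
  apply sym_family (fun q => pw 3 q) 0 (fun q => contDiff_pw (by norm_num) q)
    (fun q => pw_deriv (by norm_num) q)
  intro q
  refine ⟨1, zero_le_one, fun x => ?_⟩
  rw [one_mul, abs_of_pos (pw_pos (by norm_num) q x)]
  exact pw_le (by norm_num) q x

lemma dq_family_bound : ∀ m q, ∃ C, 0 ≤ C ∧ ∀ x,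
    |iteratedDeriv m (dq q) x| ≤ C * (1 + x ^ 2) ^ ((-(q : ℝ) - 2 - m) / 2) := by
  apply sym_family dq 2 contDiff_dq dq_deriv
  intro q
  exact ⟨(q : ℝ), by positivity, dq_le q⟩

lemma Gf_bound (ν : ℝ) : ∀ m, ∃ C, 0 ≤ C ∧ ∀ x,
    |iteratedDeriv m (Gf ν) x| ≤ C * (1 + x ^ 2) ^ ((-(3 : ℝ) - m) / 2) := by
  intro m
  obtain ⟨C1, hC10, hC1⟩ := dq_family_bound m 1
  obtain ⟨C2, hC20, hC2⟩ := pw_family_bound m 3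
  obtain ⟨C3, hC30, hC3⟩ := pw_family_bound m 5
  refine ⟨|ccoef ν| * C1 + |bcoef ν| * C2 + |dcoef ν| * C3, by positivity, fun x => ?_⟩
  have hbase : (1:ℝ) ≤ 1 + x ^ 2 := by nlinarith [sq_nonneg x]
  have hsplit : iteratedDeriv m (Gf ν) x
      = ccoef ν * iteratedDeriv m (dq 1) x + bcoef ν * iteratedDeriv m (pw 3 3) x
        + dcoef ν * iteratedDeriv m (pw 3 5) x := by
    unfold Gf
    rw [iteratedDeriv_add' _ _
      ((contDiff_const.mul (contDiff_dq 1)).add (contDiff_const.mul (contDiff_pw (by norm_num) 3)))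
      (contDiff_const.mul (contDiff_pw (by norm_num) 5)),
      iteratedDeriv_add' _ _ (contDiff_const.mul (contDiff_dq 1))
        (contDiff_const.mul (contDiff_pw (by norm_num) 3)),
      iteratedDeriv_cmul _ (contDiff_dq 1), iteratedDeriv_cmul _ (contDiff_pw (by norm_num) 3),
      iteratedDeriv_cmul _ (contDiff_pw (by norm_num) 5)]
  rw [hsplit]
  have e1 : (-(1 : ℝ) - 2 - m) / 2 = (-(3:ℝ) - m)/2 := by ring
  have e2 : (-(3 : ℝ) - 0 - m) / 2 = (-(3:ℝ) - m)/2 := by ring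
  have h1 := hC1 x
  rw [show ((1:ℕ):ℝ) = (1:ℝ) by norm_num, e1] at h1
  have h2 := hC2 x
  rw [show ((3:ℕ):ℝ) = (3:ℝ) by norm_num, e2] at h2
  have h3 : |iteratedDeriv m (pw 3 5) x| ≤ C3 * (1 + x ^ 2) ^ ((-(3:ℝ) - m)/2) := by
    refine (hC3 x).trans ?_
    apply mul_le_mul_of_nonneg_left _ hC30
    apply Real.rpow_le_rpow_of_exponent_le hbase
    push_cast
    linarith
  calc |ccoef ν * iteratedDeriv m (dq 1) x + bcoef ν * iteratedDeriv m (pw 3 3) x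
        + dcoef ν * iteratedDeriv m (pw 3 5) x|
      ≤ |ccoef ν| * |iteratedDeriv m (dq 1) x| + |bcoef ν| * |iteratedDeriv m (pw 3 3) x|
        + |dcoef ν| * |iteratedDeriv m (pw 3 5) x| := by
        refine (abs_add_le _ _).trans ?_
        gcongr
        · exact (abs_add_le _ _).trans (by rw [abs_mul, abs_mul])
        · rw [abs_mul]
    _ ≤ |ccoef ν| * (C1 * (1 + x ^ 2) ^ ((-(3:ℝ) - m)/2))
        + |bcoef ν| * (C2 * (1 + x ^ 2) ^ ((-(3:ℝ) - m)/2))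
        + |dcoef ν| * (C3 * (1 + x ^ 2) ^ ((-(3:ℝ) - m)/2)) := by
        refine add_le_add (add_le_add ?_ ?_) ?_
        · exact mul_le_mul_of_nonneg_left h1 (abs_nonneg _)
        · exact mul_le_mul_of_nonneg_left h2 (abs_nonneg _)
        · exact mul_le_mul_of_nonneg_left h3 (abs_nonneg _)
    _ = (|ccoef ν| * C1 + |bcoef ν| * C2 + |dcoef ν| * C3) * (1 + x ^ 2) ^ ((-(3:ℝ) - m)/2) := by
        ring

/-! ### the remainder function -/

def estar (ν t r : ℝ) : ℝ := t⁻¹ * (t⁻¹ * (lam ν t ^ ((1 : ℝ) / 2) * Gf ν (lam ν t * r)))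

lemma estar_even (ν t r : ℝ) : estar ν t (-r) = estar ν t r := by
  unfold estar
  rw [mul_neg, Gf_even]

/-! ### derivative computation profiles -/

def pq (q : ℕ) (y : ℝ) : ℝ := (1 + y ^ 2 / 3) ^ (-(q : ℝ) / 2)

lemma pq_base_pos (y : ℝ) : 0 < 1 + y ^ 2 / 3 := by positivity

lemma pq_hasDerivAt (q : ℕ) (y : ℝ) :
    HasDerivAt (pq q) (-(q : ℝ) / 3 * (y * pq (q + 2) y)) y := by
  have h1 : HasDerivAt (fun y : ℝ => 1 + y ^ 2 / 3) (2 * y / 3) y := by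
    have := ((hasDerivAt_pow 2 y).div_const 3).const_add (1:ℝ)
    simpa using this
  have h2 := h1.rpow_const (p := -(q : ℝ) / 2) (Or.inl (ne_of_gt (pq_base_pos y)))
  have he : (-(q : ℝ) / 2 - 1) = -((q : ℕ) + 2 : ℕ) / 2 := by push_cast; ring
  refine h2.congr_deriv ?_
  rw [pq, ← he]
  ring

def F1 (ν y : ℝ) : ℝ := ((ν-1)/2) * pq 1 y - ((ν-1)/3) * (y^2 * pq 3 y)
def F1d (ν y : ℝ) : ℝ := -(5*(ν-1)/6) * (y * pq 3 y) + ((ν-1)/3) * (y^3 * pq 5 y)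

lemma F1_hasDerivAt (ν y : ℝ) : HasDerivAt (fun y => F1 ν y) (F1d ν y) y := by
  have h1 := (pq_hasDerivAt 1 y).const_mul ((ν-1)/2)
  have h2 : HasDerivAt (fun y : ℝ => y ^ 2 * pq 3 y)
      (2 * y * pq 3 y + y ^ 2 * (-(3:ℝ)/3 * (y * pq 5 y))) y := by
    have := ((hasDerivAt_pow 2 y).mul (pq_hasDerivAt 3 y))
    refine this.congr_deriv ?_
    push_cast
    ring
  have h3 := h2.const_mul ((ν-1)/3)
  have := h1.sub h3
  refine this.congr_deriv ?_
  unfold F1d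
  push_cast
  ring

lemma contDiff_F1 (ν : ℝ) : ContDiff ℝ (⊤ : ℕ∞) (F1 ν) := by
  unfold F1
  have hpq : ∀ q : ℕ, ContDiff ℝ (⊤ : ℕ∞) (pq q) := by
    intro q
    rw [contDiff_iff_contDiffAt]
    intro x
    exact ContDiffAt.rpow_const_of_ne
      ((contDiffAt_const.add ((contDiffAt_id.pow 2).div_const 3)) :
        ContDiffAt ℝ (⊤ : ℕ∞) (fun y : ℝ => 1 + y ^ 2 / 3) x)
      (ne_of_gt (pq_base_pos x))
  exact (contDiff_const.mul (hpq 1)).sub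
    (contDiff_const.mul ((contDiff_id.pow 2).mul (hpq 3)))

/-! ### the second time derivative of u0 -/

lemma W_eq_pq (y : ℝ) : W y = pq 1 y := by
  unfold W pq
  rw [Real.sqrt_eq_rpow, ← Real.rpow_neg (by positivity)]
  norm_num

lemma u0_eq (ν r : ℝ) {s : ℝ} (hs : 0 < s) :
    u0 ν s r = s ^ ((ν-1)/2) * pq 1 (s ^ (ν-1) * r) := by
  unfold u0 lam
  rw [W_eq_pq]
  congr 1
  rw [show (ν-1)/2 = (ν-1) * (1/2) by ring, Real.rpow_mul hs.le]

lemma rpow_split (a b : ℝ) {s : ℝ} (hs : 0 < s) (h : a = b - 1) :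
    s ^ a = s ^ b * s⁻¹ := by
  rw [← Real.rpow_neg_one s, ← Real.rpow_add hs, h]
  ring_nf

lemma u0_hasDerivAt (ν r : ℝ) {s : ℝ} (hs : 0 < s) :
    HasDerivAt (fun s => u0 ν s r) (s ^ ((ν-1)/2 - 1) * F1 ν (s ^ (ν-1) * r)) s := by
  have h1 : HasDerivAt (fun x : ℝ => x ^ ((ν-1)/2)) (((ν-1)/2) * s ^ ((ν-1)/2 - 1)) s :=
    Real.hasDerivAt_rpow_const (Or.inl hs.ne')
  have h2 : HasDerivAt (fun x : ℝ => x ^ (ν-1) * r) ((ν-1) * s ^ (ν-1-1) * r) s :=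
    (Real.hasDerivAt_rpow_const (Or.inl hs.ne')).mul_const r
  have h3 := pq_hasDerivAt 1 (s ^ (ν-1) * r)
  have h4 : HasDerivAt (fun x : ℝ => pq 1 (x ^ (ν-1) * r))
      ((-((1:ℕ) : ℝ) / 3 * ((s ^ (ν-1) * r) * pq (1+2) (s ^ (ν-1) * r)))
        * ((ν-1) * s ^ (ν-1-1) * r)) s := (h3.comp s h2 :)
  have h5 := h1.mul h4
  have hgoal : HasDerivAt (fun x : ℝ => x ^ ((ν-1)/2) * pq 1 (x ^ (ν-1) * r))
      (s ^ ((ν-1)/2 - 1) * F1 ν (s ^ (ν-1) * r)) s := by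
    refine h5.congr_deriv ?_
    have h6 := rpow_split ((ν-1)/2 - 1) ((ν-1)/2) hs (by ring)
    have h7 := rpow_split (ν-1-1) (ν-1) hs (by ring)
    rw [F1, h6, h7]
    have h8 : pq (1+2) (s ^ (ν-1) * r) = pq 3 (s ^ (ν-1) * r) := by norm_num
    rw [h8]
    push_cast
    field_simp
    ring
  apply hgoal.congr_of_eventuallyEq
  filter_upwards [Ioi_mem_nhds hs] with x hx
  exact u0_eq ν r hx

lemma phi1_hasDerivAt (ν r : ℝ) {t : ℝ} (ht : 0 < t) :
    HasDerivAt (fun s : ℝ => s ^ ((ν-1)/2 - 1) * F1 ν (s ^ (ν-1) * r))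
      (t ^ ((ν-1)/2 - 2) *
        (((ν-1)/2 - 1) * F1 ν (t ^ (ν-1) * r)
          + (ν-1) * ((t ^ (ν-1) * r) * F1d ν (t ^ (ν-1) * r)))) t := by
  have h1 : HasDerivAt (fun x : ℝ => x ^ ((ν-1)/2 - 1)) (((ν-1)/2 - 1) * t ^ ((ν-1)/2 - 1 - 1)) t :=
    Real.hasDerivAt_rpow_const (Or.inl ht.ne')
  have h2 : HasDerivAt (fun x : ℝ => x ^ (ν-1) * r) ((ν-1) * t ^ (ν-1-1) * r) t :=
    (Real.hasDerivAt_rpow_const (Or.inl ht.ne')).mul_const r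
  have h4 : HasDerivAt (fun x : ℝ => F1 ν (x ^ (ν-1) * r))
      (F1d ν (t ^ (ν-1) * r) * ((ν-1) * t ^ (ν-1-1) * r)) t :=
    ((F1_hasDerivAt ν (t ^ (ν-1) * r)).comp t h2 :)
  have h5 := h1.mul h4
  refine h5.congr_deriv ?_
  have h6 := rpow_split ((ν-1)/2 - 1 - 1) ((ν-1)/2 - 1) ht (by ring)
  have h7 := rpow_split (ν-1-1) (ν-1) ht (by ring)
  have h8 := rpow_split ((ν-1)/2 - 2) ((ν-1)/2 - 1) ht (by ring)
  rw [h6, h7, h8]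
  field_simp

lemma e0_eq (ν : ℝ) {t : ℝ} (ht : 0 < t) (r : ℝ) :
    e0 ν t r = -(t ^ ((ν-1)/2 - 2) *
      (((ν-1)/2 - 1) * F1 ν (t ^ (ν-1) * r)
        + (ν-1) * ((t ^ (ν-1) * r) * F1d ν (t ^ (ν-1) * r)))) := by
  unfold e0
  congr 1
  have h2 : iteratedDeriv 2 (fun s => u0 ν s r) t
      = deriv (deriv (fun s => u0 ν s r)) t := by
    rw [iteratedDeriv_succ, iteratedDeriv_one]
  rw [h2]
  have hev : deriv (fun s => u0 ν s r)
      =ᶠ[nhds t] (fun s : ℝ => s ^ ((ν-1)/2 - 1) * F1 ν (s ^ (ν-1) * r)) := by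
    filter_upwards [Ioi_mem_nhds ht] with x hx
    exact (u0_hasDerivAt ν r hx).deriv
  rw [hev.deriv_eq]
  exact (phi1_hasDerivAt ν r ht).deriv

/-! ### the key algebraic identity -/

lemma pq_eq_pw (q : ℕ) (y : ℝ) : pq q y = (3:ℝ) ^ ((q:ℝ)/2) * pw 3 q y := by
  unfold pq pw
  rw [show (1 + y^2/3 : ℝ) = (3+y^2)/3 by ring,
    Real.div_rpow (by positivity) (by norm_num)]
  rw [div_eq_mul_inv, ← Real.rpow_neg (by norm_num)]
  rw [show -(-(q:ℝ)/2) = (q:ℝ)/2 by ring]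
  ring

lemma pw_pow (q : ℕ) (y : ℝ) : pw 3 q y = (pw 3 1 y) ^ q := by
  unfold pw
  push_cast
  rw [← Real.rpow_natCast ((3 + y^2) ^ (-(1:ℝ)/2)) q, ← Real.rpow_mul (by positivity)]
  congr 1
  push_cast
  ring

lemma pw_rel (y : ℝ) : (3 + y^2) * (pw 3 1 y) ^ 2 = 1 := by
  unfold pw
  push_cast
  rw [← Real.rpow_natCast ((3 + y^2) ^ (-(1:ℝ)/2)) 2, ← Real.rpow_mul (by positivity)]
  rw [show (-(1:ℝ)/2 * ((2:ℕ):ℝ)) = -1 by push_cast; ring]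
  rw [Real.rpow_neg_one]
  exact mul_inv_cancel₀ (by positivity)

lemma key_identity (ν y : ℝ) :
    -((((ν-1)/2 - 1) * F1 ν y + (ν-1) * (y * F1d ν y)))
      = ccoef ν * pw 1 1 y + Gf ν y := by
  have h31 : (3:ℝ) ^ (((1:ℕ):ℝ)/2) = Real.sqrt 3 := by
    rw [Real.sqrt_eq_rpow]
    norm_num
  have h33 : (3:ℝ) ^ (((3:ℕ):ℝ)/2) = 3 * Real.sqrt 3 := by
    rw [Real.sqrt_eq_rpow, show (((3:ℕ):ℝ)/2) = 1 + (1:ℝ)/2 by norm_num,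
      Real.rpow_add (by norm_num), Real.rpow_one]
  have h35 : (3:ℝ) ^ (((5:ℕ):ℝ)/2) = 9 * Real.sqrt 3 := by
    rw [Real.sqrt_eq_rpow, show (((5:ℕ):ℝ)/2) = 2 + (1:ℝ)/2 by norm_num,
      Real.rpow_add (by norm_num),
      show ((3:ℝ)^(2:ℝ)) = 9 by
        rw [show ((2:ℝ)) = ((2:ℕ):ℝ) by norm_num, Real.rpow_natCast]; norm_num]
  unfold F1 F1d Gf ccoef bcoef dcoef dq
  rw [pq_eq_pw 1, pq_eq_pw 3, pq_eq_pw 5, h31, h33, h35, pw_pow 3, pw_pow 5]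
  have hrel := pw_rel y
  set s3 := Real.sqrt 3
  set X := pw 3 1 y
  set m := ν - 1
  linear_combination (s3 * ((3*m^2 - m) * X - 3*m^2 * X * (y^2*X^2 + 1 - 3*X^2))) * hrel


/-! ### representation of iterated t-derivatives -/

lemma inner_eq (ν : ℝ) {s : ℝ} (hs : s ≠ 0) (r' : ℝ) :
    s ^ 2 * estar ν s r' = lam ν s ^ ((1:ℝ)/2) * Gf ν (lam ν s * r') := by
  unfold estar
  field_simp

lemma lam_pow_eq (ν : ℝ) {s : ℝ} (hs : 0 < s) (k : ℕ) :
    lam ν s ^ ((1:ℝ)/2) * lam ν s ^ k = s ^ ((ν-1) * ((k:ℝ) + 1/2)) := by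
  unfold lam
  rw [← Real.rpow_mul hs.le (ν-1) (1/2)]
  rw [← Real.rpow_natCast (s ^ (ν-1)) k, ← Real.rpow_mul hs.le]
  rw [← Real.rpow_add hs]
  congr 1
  ring

lemma inner_iter (ν : ℝ) (k : ℕ) {s : ℝ} (hs : 0 < s) (r : ℝ) :
    iteratedDeriv k (fun r' => s ^ 2 * estar ν s r') r
      = s ^ ((ν-1) * ((k:ℝ) + 1/2)) * iteratedDeriv k (Gf ν) (lam ν s * r) := by
  have h1 : (fun r' => s ^ 2 * estar ν s r')
      = fun r' => lam ν s ^ ((1:ℝ)/2) * Gf ν (lam ν s * r') := by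
    funext r'
    exact inner_eq ν hs.ne' r'
  rw [h1]
  have h2 : ContDiff ℝ (⊤ : ℕ∞) (fun r' : ℝ => Gf ν (lam ν s * r')) :=
    (contDiff_Gf ν).comp (contDiff_const.mul contDiff_id)
  rw [iteratedDeriv_cmul _ h2]
  have h3 := congrFun (iteratedDeriv_comp_const_mul (f := Gf ν) (n := k)
    ((contDiff_Gf ν).of_le (by exact_mod_cast le_top)) (lam ν s)) r
  rw [h3, ← mul_assoc, lam_pow_eq ν hs k]

lemma term_hasDerivAt (ν : ℝ) (Gfn : ℝ → ℝ) (hG : ContDiff ℝ (⊤ : ℕ∞) Gfn) (b : ℝ) (j n : ℕ) (r : ℝ)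
    {t : ℝ} (ht : 0 < t) :
    HasDerivAt
      (fun x : ℝ => x ^ b * ((x ^ (ν-1) * r) ^ j * iteratedDeriv n Gfn (x ^ (ν-1) * r)))
      (t ^ (b - 1) *
        ((b + (j:ℝ) * (ν-1)) * ((t ^ (ν-1) * r) ^ j * iteratedDeriv n Gfn (t ^ (ν-1) * r))
          + (ν-1) * ((t ^ (ν-1) * r) ^ (j+1) * iteratedDeriv (n+1) Gfn (t ^ (ν-1) * r)))) t := by
  have hdiff : ∀ m : ℕ, Differentiable ℝ (iteratedDeriv m Gfn) := diff_iter Gfn hG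
  have h1 : HasDerivAt (fun x : ℝ => x ^ b) (b * t ^ (b - 1)) t :=
    Real.hasDerivAt_rpow_const (Or.inl ht.ne')
  have h2 : HasDerivAt (fun x : ℝ => x ^ (ν-1) * r) ((ν-1) * t ^ (ν-1-1) * r) t :=
    (Real.hasDerivAt_rpow_const (Or.inl ht.ne')).mul_const r
  have h5 : HasDerivAt (iteratedDeriv n Gfn) (iteratedDeriv (n+1) Gfn (t ^ (ν-1) * r))
      (t ^ (ν-1) * r) := by
    have := ((hdiff n) (t ^ (ν-1) * r)).hasDerivAt
    rwa [show deriv (iteratedDeriv n Gfn) = iteratedDeriv (n+1) Gfn from deriv_iter Gfn n] at this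
  have h6 : HasDerivAt (fun x : ℝ => iteratedDeriv n Gfn (x ^ (ν-1) * r))
      (iteratedDeriv (n+1) Gfn (t ^ (ν-1) * r) * ((ν-1) * t ^ (ν-1-1) * r)) t :=
    (h5.comp t h2 :)
  have hb1 := rpow_split (b - 1) b ht (by ring)
  have hb2 := rpow_split (ν-1-1) (ν-1) ht (by ring)
  rcases j with _ | j
  · have h7 := h1.mul h6
    simp only [pow_zero, one_mul, Nat.cast_zero, zero_mul, add_zero, pow_one]
    refine h7.congr_deriv ?_
    rw [hb1, hb2]
    field_simp
    ring
  · have h3 : HasDerivAt (fun y : ℝ => y ^ (j+1)) (((j:ℝ)+1) * (t ^ (ν-1) * r) ^ j)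
        (t ^ (ν-1) * r) := by
      have := hasDerivAt_pow (j+1) (t ^ (ν-1) * r)
      simpa using this
    have h4 : HasDerivAt (fun x : ℝ => (x ^ (ν-1) * r) ^ (j+1))
        ((((j:ℝ)+1) * (t ^ (ν-1) * r) ^ j) * ((ν-1) * t ^ (ν-1-1) * r)) t :=
      (h3.comp t h2 :)
    have h7 := h1.mul (h4.mul h6)
    refine h7.congr_deriv ?_
    rw [Pi.mul_apply]
    rw [hb1, hb2]
    have hyj : (t ^ (ν-1) * r) ^ (j+1) = (t ^ (ν-1) * r) ^ j * (t ^ (ν-1) * r) := pow_succ _ _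
    have hyj2 : (t ^ (ν-1) * r) ^ (j+1+1) = (t ^ (ν-1) * r) ^ (j+1) * (t ^ (ν-1) * r) :=
      pow_succ _ _
    rw [hyj2, hyj]
    push_cast
    field_simp
    ring

lemma rep (ν : ℝ) (k : ℕ) : ∀ l : ℕ, ∃ c : ℕ → ℝ,
    (∀ j, l < j → c j = 0) ∧
    ∀ t : ℝ, 0 < t → ∀ r : ℝ,
      iteratedDeriv l (fun s => iteratedDeriv k (fun r' => s ^ 2 * estar ν s r') r) t
        = ∑ j ∈ Finset.range (l+1),
            c j * t ^ ((ν-1) * ((k:ℝ) + 1/2) - l) *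
              ((t ^ (ν-1) * r) ^ j * iteratedDeriv (k+j) (Gf ν) (t ^ (ν-1) * r)) := by
  set a : ℝ := (ν-1) * ((k:ℝ) + 1/2) with ha
  intro l
  induction l with
  | zero =>
    refine ⟨fun j => if j = 0 then 1 else 0, fun j hj => if_neg (by omega), fun t ht r => ?_⟩
    rw [iteratedDeriv_zero, inner_iter ν k ht r, Finset.sum_range_one]
    unfold lam
    norm_num
    exact Or.inl rfl
  | succ l IH =>
    obtain ⟨c, hc0, hc⟩ := IH
    refine ⟨fun j => (a - l + (j:ℝ) * (ν-1)) * c j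
        + (ν-1) * (if j = 0 then 0 else c (j-1)), fun j hj => ?_, fun t ht r => ?_⟩
    · show (a - l + (j:ℝ) * (ν-1)) * c j + (ν-1) * (if j = 0 then 0 else c (j-1)) = 0
      rw [hc0 j (by omega), if_neg (by omega), hc0 (j-1) (by omega)]
      ring
    · beta_reduce
      rw [iteratedDeriv_succ]
      have hev : iteratedDeriv l (fun s => iteratedDeriv k (fun r' => s ^ 2 * estar ν s r') r)
          =ᶠ[nhds t] (fun t => ∑ j ∈ Finset.range (l+1),
            c j * t ^ (a - l) * ((t ^ (ν-1) * r) ^ j * iteratedDeriv (k+j) (Gf ν) (t ^ (ν-1) * r))) := by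
        filter_upwards [Ioi_mem_nhds ht] with x hx
        exact hc x hx r
      rw [hev.deriv_eq]
      have hder : HasDerivAt (fun t => ∑ j ∈ Finset.range (l+1),
            c j * t ^ (a - l) * ((t ^ (ν-1) * r) ^ j * iteratedDeriv (k+j) (Gf ν) (t ^ (ν-1) * r)))
          (∑ j ∈ Finset.range (l+1),
            c j * (t ^ (a - l - 1) *
              ((a - l + (j:ℝ) * (ν-1)) * ((t ^ (ν-1) * r) ^ j * iteratedDeriv (k+j) (Gf ν) (t ^ (ν-1) * r))
                + (ν-1) * ((t ^ (ν-1) * r) ^ (j+1) * iteratedDeriv (k+j+1) (Gf ν) (t ^ (ν-1) * r))))) t := by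
        apply HasDerivAt.fun_sum
        intro j hj
        have := (term_hasDerivAt ν (Gf ν) (contDiff_Gf ν) (a - l) j (k+j) r ht).const_mul (c j)
        convert this using 1
        all_goals first
          | (funext x; ring)
          | ring
          | rfl
      rw [hder.deriv]
      -- re-index
      have hsplit : ∀ j ∈ Finset.range (l+1),
          c j * (t ^ (a - l - 1) *
              ((a - l + (j:ℝ) * (ν-1)) * ((t ^ (ν-1) * r) ^ j * iteratedDeriv (k+j) (Gf ν) (t ^ (ν-1) * r))
                + (ν-1) * ((t ^ (ν-1) * r) ^ (j+1) * iteratedDeriv (k+j+1) (Gf ν) (t ^ (ν-1) * r))))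
          = ((a - l + (j:ℝ) * (ν-1)) * c j) * t ^ (a - (l+1:ℕ)) *
              ((t ^ (ν-1) * r) ^ j * iteratedDeriv (k+j) (Gf ν) (t ^ (ν-1) * r))
            + ((ν-1) * c j) * t ^ (a - (l+1:ℕ)) *
              ((t ^ (ν-1) * r) ^ (j+1) * iteratedDeriv (k+(j+1)) (Gf ν) (t ^ (ν-1) * r)) := by
        intro j hj
        rw [show a - ((l+1:ℕ):ℝ) = a - l - 1 by push_cast; ring,
          show k+(j+1) = k+j+1 by omega]
        ring
      rw [Finset.sum_congr rfl hsplit, Finset.sum_add_distrib]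
      -- target sum
      have htarget : ∑ j ∈ Finset.range (l+1+1),
            ((a - l + (j:ℝ) * (ν-1)) * c j + (ν-1) * (if j = 0 then 0 else c (j-1)))
              * t ^ (a - (l+1:ℕ)) *
              ((t ^ (ν-1) * r) ^ j * iteratedDeriv (k+j) (Gf ν) (t ^ (ν-1) * r))
          = ∑ j ∈ Finset.range (l+1+1),
              ((a - l + (j:ℝ) * (ν-1)) * c j) * t ^ (a - (l+1:ℕ)) *
                ((t ^ (ν-1) * r) ^ j * iteratedDeriv (k+j) (Gf ν) (t ^ (ν-1) * r))
            + ∑ j ∈ Finset.range (l+1+1),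
              ((ν-1) * (if j = 0 then 0 else c (j-1))) * t ^ (a - (l+1:ℕ)) *
                ((t ^ (ν-1) * r) ^ j * iteratedDeriv (k+j) (Gf ν) (t ^ (ν-1) * r)) := by
        rw [← Finset.sum_add_distrib]
        apply Finset.sum_congr rfl
        intro j hj
        ring
      rw [htarget]
      congr 1
      · -- first sums: extend range by one zero term
        conv_rhs => rw [Finset.sum_range_succ]
        rw [hc0 (l+1) (by omega)]
        norm_num
      · -- second sums: shift index
        conv_rhs => rw [Finset.sum_range_succ']
        norm_num


/-! ### bracket conversions -/

lemma jap_rpow (x b : ℝ) : jap x ^ b = (1 + x ^ 2) ^ (b/2) := by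
  unfold jap
  rw [Real.sqrt_eq_rpow, ← Real.rpow_mul (by positivity)]
  congr 1
  ring

lemma jap_inv (y : ℝ) : (jap y)⁻¹ = pw 1 1 y := by
  unfold jap pw
  rw [Real.sqrt_eq_rpow, ← Real.rpow_neg (by positivity)]
  norm_num

/-! ### the full estimate -/

lemma estimate (ν : ℝ) (k l : ℕ) : ∃ C : ℝ, ∀ t : ℝ, 0 < t → ∀ r : ℝ,
    |iteratedDeriv l (fun s => iteratedDeriv k (fun r' => s ^ 2 * estar ν s r') r) t|
      ≤ C * lam ν t ^ ((1:ℝ)/2 + (k:ℝ) + (l:ℝ)) * (lam ν t * t) ^ (-(l:ℝ))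
        * jap (lam ν t * r) ^ (-(3:ℝ) - (k:ℝ)) := by
  obtain ⟨c, hc0, hc⟩ := rep ν k l
  have H : ∀ j : ℕ, ∃ D, 0 ≤ D ∧ ∀ x,
      |iteratedDeriv (k+j) (Gf ν) x| ≤ D * (1 + x ^ 2) ^ ((-(3:ℝ) - (k+j:ℕ)) / 2) :=
    fun j => Gf_bound ν (k+j)
  choose D hD0 hD using H
  refine ⟨∑ j ∈ Finset.range (l+1), |c j| * D j, fun t ht r => ?_⟩
  set R : ℝ := t ^ (ν-1) * r with hR
  have hRlam : lam ν t * r = R := rfl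
  set a : ℝ := (ν-1) * ((k:ℝ) + 1/2) with ha2
  have hpos1 : (0:ℝ) < 1 + R ^ 2 := by positivity
  have htpow : (0:ℝ) < t ^ (a - l) := Real.rpow_pos_of_pos ht _
  -- rewrite RHS factors
  have hRHS : lam ν t ^ ((1:ℝ)/2 + (k:ℝ) + (l:ℝ)) * (lam ν t * t) ^ (-(l:ℝ))
        * jap (lam ν t * r) ^ (-(3:ℝ) - (k:ℝ))
      = t ^ (a - l) * (1 + R ^ 2) ^ ((-(3:ℝ) - (k:ℝ))/2) := by
    rw [hRlam, jap_rpow]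
    have h1 : lam ν t ^ ((1:ℝ)/2 + (k:ℝ) + (l:ℝ)) = t ^ ((ν-1) * ((1:ℝ)/2 + (k:ℝ) + (l:ℝ))) := by
      unfold lam
      rw [Real.rpow_mul ht.le]
    have h2 : (lam ν t * t) ^ (-(l:ℝ)) = t ^ (ν * (-(l:ℝ))) := by
      unfold lam
      rw [show t ^ (ν-1) * t = t ^ ν by
        rw [← Real.rpow_add_one ht.ne']
        ring_nf]
      rw [Real.rpow_mul ht.le]
    rw [h1, h2, ← Real.rpow_add ht]
    congr 1
    rw [ha2]
    ring
  rw [hc t ht r]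
  -- bound the sum
  have hterm : ∀ j ∈ Finset.range (l+1),
      |c j * t ^ (a - l) * (R ^ j * iteratedDeriv (k+j) (Gf ν) R)|
        ≤ |c j| * D j * (t ^ (a - l) * (1 + R ^ 2) ^ ((-(3:ℝ) - (k:ℝ))/2)) := by
    intro j hj
    rw [abs_mul, abs_mul, abs_mul]
    rw [abs_of_pos htpow]
    have hRj : |R ^ j| ≤ (1 + R ^ 2) ^ ((j:ℝ)/2) := by
      rw [abs_pow]
      calc |R| ^ j ≤ ((1 + R ^ 2) ^ ((1:ℝ)/2)) ^ j :=
            pow_le_pow_left₀ (abs_nonneg R) (abs_le_jbr R) j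
        _ = (1 + R ^ 2) ^ ((j:ℝ)/2) := by
            rw [← Real.rpow_natCast ((1 + R ^ 2) ^ ((1:ℝ)/2)) j, ← Real.rpow_mul hpos1.le]
            congr 1
            ring
    have hmul : |R ^ j| * |iteratedDeriv (k+j) (Gf ν) R|
        ≤ (1 + R ^ 2) ^ ((j:ℝ)/2) * (D j * (1 + R ^ 2) ^ ((-(3:ℝ) - (k+j:ℕ)) / 2)) :=
      mul_le_mul hRj (hD j R) (abs_nonneg _) (by positivity)
    have heq : (1 + R ^ 2) ^ ((j:ℝ)/2) * (D j * (1 + R ^ 2) ^ ((-(3:ℝ) - (k+j:ℕ)) / 2))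
        = D j * (1 + R ^ 2) ^ ((-(3:ℝ) - (k:ℝ))/2) := by
      rw [mul_comm ((1 + R ^ 2) ^ ((j:ℝ)/2)) _, mul_assoc, jbr_mul]
      congr 1
      push_cast
      ring
    calc |c j| * t ^ (a - l) * (|R ^ j| * |iteratedDeriv (k+j) (Gf ν) R|)
        ≤ |c j| * t ^ (a - l) * (D j * (1 + R ^ 2) ^ ((-(3:ℝ) - (k:ℝ))/2)) := by
          apply mul_le_mul_of_nonneg_left _ (by positivity)
          rw [← heq]
          exact hmul
      _ = |c j| * D j * (t ^ (a - l) * (1 + R ^ 2) ^ ((-(3:ℝ) - (k:ℝ))/2)) := by ring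
  calc |∑ j ∈ Finset.range (l+1),
        c j * t ^ (a - l) * (R ^ j * iteratedDeriv (k+j) (Gf ν) R)|
      ≤ ∑ j ∈ Finset.range (l+1),
        |c j * t ^ (a - l) * (R ^ j * iteratedDeriv (k+j) (Gf ν) R)| :=
        Finset.abs_sum_le_sum_abs _ _
    _ ≤ ∑ j ∈ Finset.range (l+1),
        |c j| * D j * (t ^ (a - l) * (1 + R ^ 2) ^ ((-(3:ℝ) - (k:ℝ))/2)) :=
        Finset.sum_le_sum hterm
    _ = (∑ j ∈ Finset.range (l+1), |c j| * D j)
          * (t ^ (a - l) * (1 + R ^ 2) ^ ((-(3:ℝ) - (k:ℝ))/2)) := by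
        rw [← Finset.sum_mul]
    _ = (∑ j ∈ Finset.range (l+1), |c j| * D j)
          * (lam ν t ^ ((1:ℝ)/2 + (k:ℝ) + (l:ℝ)) * (lam ν t * t) ^ (-(l:ℝ))
            * jap (lam ν t * r) ^ (-(3:ℝ) - (k:ℝ))) := by rw [hRHS]
    _ = (∑ j ∈ Finset.range (l+1), |c j| * D j) * lam ν t ^ ((1:ℝ)/2 + (k:ℝ) + (l:ℝ))
          * (lam ν t * t) ^ (-(l:ℝ)) * jap (lam ν t * r) ^ (-(3:ℝ) - (k:ℝ)) := by ring

/-! ### smoothness -/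

lemma estar_contDiffOn (ν : ℝ) :
    ContDiffOn ℝ (⊤ : ℕ∞) (fun p : ℝ × ℝ => estar ν p.1 p.2) {p : ℝ × ℝ | 0 < p.1} := by
  intro p hp
  apply ContDiffAt.contDiffWithinAt
  have hp1 : p.1 ≠ 0 := ne_of_gt hp
  have hfst : ContDiffAt ℝ (⊤ : ℕ∞) (fun q : ℝ × ℝ => q.1) p := contDiffAt_fst
  have hlam : ContDiffAt ℝ (⊤ : ℕ∞) (fun q : ℝ × ℝ => lam ν q.1) p :=
    (Real.contDiffAt_rpow_const_of_ne (x := p.1) (p := ν - 1) hp1).comp p hfst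
  have hlam_ne : lam ν p.1 ≠ 0 := ne_of_gt (Real.rpow_pos_of_pos hp _)
  have hpow : ContDiffAt ℝ (⊤ : ℕ∞) (fun q : ℝ × ℝ => lam ν q.1 ^ ((1:ℝ)/2)) p :=
    ((Real.contDiffAt_rpow_const_of_ne (x := lam ν p.1) (p := (1:ℝ)/2) hlam_ne).comp p hlam :)
  have harg : ContDiffAt ℝ (⊤ : ℕ∞) (fun q : ℝ × ℝ => lam ν q.1 * q.2) p := hlam.mul contDiffAt_snd
  have hGf : ContDiffAt ℝ (⊤ : ℕ∞) (fun q : ℝ × ℝ => Gf ν (lam ν q.1 * q.2)) p :=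
    ((contDiff_Gf ν).contDiffAt).comp p harg
  have hinv : ContDiffAt ℝ (⊤ : ℕ∞) (fun q : ℝ × ℝ => q.1⁻¹) p := hfst.inv hp1
  exact hinv.mul (hinv.mul (hpow.mul hGf))

/-! ### parity -/

lemma odd_vanish (f : ℝ → ℝ) (hf : ∀ x, f (-x) = f x) (k : ℕ) :
    iteratedDeriv (2*k+1) f 0 = 0 := by
  have h := iteratedDeriv_comp_neg (2*k+1) f 0
  rw [funext hf, neg_zero] at h
  have hodd : ((-1:ℝ)) ^ (2*k+1) = -1 := Odd.neg_one_pow ⟨k, by ring⟩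
  rw [hodd] at h
  simp only [smul_eq_mul, neg_one_mul] at h
  linarith

lemma e0_even (ν t r : ℝ) : e0 ν t (-r) = e0 ν t r := by
  unfold e0
  congr 1
  have : (fun s => u0 ν s (-r)) = fun s => u0 ν s r := by
    funext s
    unfold u0 W
    rw [mul_neg, neg_sq]
  rw [this]

/-! ### the key identity in final form -/

lemma main_identity (ν : ℝ) {t : ℝ} (ht : 0 < t) (r : ℝ) :
    t ^ 2 * e0 ν t r
      = ccoef ν * lam ν t ^ ((1:ℝ)/2) * (jap (lam ν t * r))⁻¹ + t ^ 2 * estar ν t r := by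
  rw [inner_eq ν ht.ne' r, e0_eq ν ht r, jap_inv]
  have hl1 : lam ν t ^ ((1:ℝ)/2) = t ^ ((ν-1)/2) := by
    unfold lam
    rw [← Real.rpow_mul ht.le]
    congr 1
    ring
  have ht2 : (t:ℝ) ^ (2:ℕ) * t ^ ((ν-1)/2 - 2) = t ^ ((ν-1)/2) := by
    rw [← Real.rpow_natCast t 2, ← Real.rpow_add ht]
    congr 1
    push_cast
    ring
  have hlam : lam ν t * r = t ^ (ν-1) * r := rfl
  rw [hl1, hlam]
  calc t ^ 2 * -(t ^ ((ν-1)/2 - 2) *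
        (((ν-1)/2 - 1) * F1 ν (t ^ (ν-1) * r)
          + (ν-1) * ((t ^ (ν-1) * r) * F1d ν (t ^ (ν-1) * r))))
      = t ^ ((ν-1)/2) * (-((((ν-1)/2 - 1) * F1 ν (t ^ (ν-1) * r)
          + (ν-1) * ((t ^ (ν-1) * r) * F1d ν (t ^ (ν-1) * r))))) := by
        rw [← ht2]
        ring
    _ = t ^ ((ν-1)/2) * (ccoef ν * pw 1 1 (t ^ (ν-1) * r) + Gf ν (t ^ (ν-1) * r)) := by
        rw [key_identity]
    _ = ccoef ν * t ^ ((ν-1)/2) * pw 1 1 (t ^ (ν-1) * r)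
          + t ^ ((ν-1)/2) * Gf ν (t ^ (ν-1) * r) := by ring

end E0aux

/-- **Lemma 2.1**: the error `e₀ = -∂ₜ²u₀` has the form
`t²e₀(t,r) = c_ν λ(t)^{1/2}⟨λ(t)r⟩^{-1} + t²e₀*(t,r)` with a smooth remainder `e₀*`
satisfying `|∂ₜ^ℓ∂ᵣ^k (t²e₀*(t,r))| ≤ C_{k,ℓ} λ(t)^{1/2+k+ℓ}(λ(t)t)^{-ℓ}⟨λ(t)r⟩^{-3-k}`,
and all odd-order `r`-derivatives of `e₀(t,·)` and `e₀*(t,·)` vanish at `r = 0`. -/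
theorem error_e0_structure (ν : ℝ) :
    ∃ c : ℝ, ∃ estar : ℝ → ℝ → ℝ,
      ContDiffOn ℝ (⊤ : ℕ∞) (fun p : ℝ × ℝ => estar p.1 p.2) {p : ℝ × ℝ | 0 < p.1} ∧
      (∀ t > (0 : ℝ), ∀ r ≥ (0 : ℝ),
        t ^ 2 * e0 ν t r
          = c * lam ν t ^ ((1 : ℝ) / 2) * (jap (lam ν t * r))⁻¹ + t ^ 2 * estar t r) ∧
      (∀ k l : ℕ, ∀ t₀ > (0 : ℝ), ∃ C : ℝ,
        ∀ t ≥ t₀, ∀ r ≥ (0 : ℝ),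
          |iteratedDeriv l (fun s => iteratedDeriv k (fun r' => s ^ 2 * estar s r') r) t|
            ≤ C * lam ν t ^ ((1 : ℝ) / 2 + (k : ℝ) + (l : ℝ))
              * (lam ν t * t) ^ (-(l : ℝ))
              * jap (lam ν t * r) ^ (-(3 : ℝ) - (k : ℝ))) ∧
      (∀ t > (0 : ℝ), ∀ k : ℕ,
        iteratedDeriv (2 * k + 1) (fun r => e0 ν t r) 0 = 0 ∧
        iteratedDeriv (2 * k + 1) (fun r => estar t r) 0 = 0) := by
  refine ⟨E0aux.ccoef ν, E0aux.estar ν, E0aux.estar_contDiffOn ν, ?_, ?_, ?_⟩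
  · intro t ht r _
    exact E0aux.main_identity ν ht r
  · intro k l t₀ ht₀
    obtain ⟨C, hC⟩ := E0aux.estimate ν k l
    exact ⟨C, fun t ht r _ => hC t (lt_of_lt_of_le ht₀ ht) r⟩
  · intro t ht k
    constructor
    · exact E0aux.odd_vanish _ (fun x => E0aux.e0_even ν t x) k
    · exact E0aux.odd_vanish _ (fun x => E0aux.estar_even ν t x) k

end
end

section
/- There exist ξ₁ > 0 and C > 0 such that for all ξ ≥ ξ₁: c₀(ξ) := 1/W(f₊(·,ξ), φ(·,ξ)) = 1 + E₁(ξ) with |E₁(ξ)| ≤ C ξ^{−1/2}, and ρ(ξ) := (1/π) Im[c₀(ξ) W(θ(·,ξ), f₊(·,ξ))] = (1/π) ξ^{1/2}(1 + E₂(ξ)) with |E₂(ξ)| ≤ C ξ^{−1/2}. -/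
noncomputable section

open Real Complex Filter

/-- The free oscillatory factor `e^{i√ξ R}`. -/
def osc (ξ R : ℝ) : ℂ := Complex.exp (Complex.I * Complex.ofReal (Real.sqrt ξ * R))

/-- The Wronskian `W(g,h)(R) = g(R)h'(R) - g'(R)h(R)` of two complex functions. -/
def Wron (g h : ℝ → ℂ) (R : ℝ) : ℂ := g R * deriv h R - deriv g R * h R

/-!
Both Wronskians are constant in `R`, so they can be read off at `R = 0`:
`W(f₊, φ) = f₊(0) = 1 + b(0, ξ)` and `W(θ, f₊) = f₊'(0) = i√ξ f₊(0) + ∂_R b(0, ξ)`.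
Hence `c₀ = (1 + b(0, ξ))⁻¹` and `c₀ W(θ, f₊) = i√ξ + ∂_R b(0, ξ) / (1 + b(0, ξ))`, and the symbol
bounds `|b(0, ξ)|, |∂_R b(0, ξ)| ≲ ξ^{-1/2}` give both expansions once `|b(0, ξ)| ≤ 1/2`.
-/

open Set Topology

section Wronskian

variable {g h c : ℝ → ℂ}

theorem hasDerivAt_wron (hg : ContDiff ℝ 2 g) (hh : ContDiff ℝ 2 h) (x : ℝ) :
    HasDerivAt (Wron g h) (g x * deriv (deriv h) x - deriv (deriv g) x * h x) x :=
  (((hg.differentiable two_ne_zero x).hasDerivAt.mul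
    (hh.differentiable_deriv_two x).hasDerivAt).sub
    ((hg.differentiable_deriv_two x).hasDerivAt.mul
      (hh.differentiable two_ne_zero x).hasDerivAt)).congr_deriv (by ring)

theorem wron_eq_wron_zero (hg : ContDiff ℝ 2 g) (hh : ContDiff ℝ 2 h)
    (hgc : ∀ R > 0, deriv (deriv g) R = c R * g R) (hhc : ∀ R > 0, deriv (deriv h) R = c R * h R)
    {R : ℝ} (hR : 0 ≤ R) : Wron g h R = Wron g h 0 := by
  -- `c` need not be continuous at `0`, but `g h'' - g'' h` is
  have hzero : EqOn (fun x => g x * deriv (deriv h) x - deriv (deriv g) x * h x) 0 (Ici 0) := by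
    rw [← closure_Ioi]
    refine EqOn.closure (fun x hx => ?_) (by fun_prop) continuous_const
    simp only [Pi.zero_apply, hgc x hx, hhc x hx]
    ring
  refine constant_of_has_deriv_right_zero
    (fun x _ => (hasDerivAt_wron hg hh x).continuousAt.continuousWithinAt)
    (fun x hx => (hasDerivAt_wron hg hh x).hasDerivWithinAt.congr_deriv (hzero hx.1)) R ⟨hR, le_rfl⟩

end Wronskian

section ofReal

variable {φ : ℝ → ℝ}

theorem deriv_ofReal_comp (hφ : Differentiable ℝ φ) :
    deriv (fun x => (φ x : ℂ)) = fun x => ((deriv φ x : ℝ) : ℂ) :=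
  funext fun x => (hφ x).hasDerivAt.ofReal_comp.deriv

theorem ContDiff.ofReal_comp {n : WithTop ℕ∞} (hφ : ContDiff ℝ n φ) :
    ContDiff ℝ n (fun x => (φ x : ℂ)) :=
  Complex.ofRealCLM.contDiff.comp hφ

theorem deriv_deriv_ofReal_comp (hφ : ContDiff ℝ 2 φ) :
    deriv (deriv (fun x => (φ x : ℂ))) = fun x => ((deriv (deriv φ) x : ℝ) : ℂ) := by
  rw [deriv_ofReal_comp (hφ.differentiable two_ne_zero)]
  exact deriv_ofReal_comp hφ.differentiable_deriv_two

end ofReal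

section FundamentalSystem

variable {q φ θ : ℝ → ℝ} {f : ℝ → ℂ}

theorem wron_sine_eq (hf : ContDiff ℝ 2 f) (hφ : ContDiff ℝ 2 φ)
    (hfq : ∀ R > 0, deriv (deriv f) R = q R * f R)
    (hφq : ∀ R > 0, deriv (deriv φ) R = q R * φ R) (hφ0 : φ 0 = 0) (hφ'0 : deriv φ 0 = 1)
    {R : ℝ} (hR : 0 ≤ R) : Wron f (fun x => (φ x : ℂ)) R = f 0 := by
  rw [wron_eq_wron_zero hf hφ.ofReal_comp hfq (fun x hx => ?_) hR, Wron,
    deriv_ofReal_comp (hφ.differentiable two_ne_zero)]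
  · simp [hφ0, hφ'0]
  · simp [deriv_deriv_ofReal_comp hφ, hφq x hx]

theorem wron_cosine_eq (hf : ContDiff ℝ 2 f) (hθ : ContDiff ℝ 2 θ)
    (hfq : ∀ R > 0, deriv (deriv f) R = q R * f R)
    (hθq : ∀ R > 0, deriv (deriv θ) R = q R * θ R) (hθ0 : θ 0 = 1) (hθ'0 : deriv θ 0 = 0)
    {R : ℝ} (hR : 0 ≤ R) : Wron (fun x => (θ x : ℂ)) f R = deriv f 0 := by
  rw [wron_eq_wron_zero hθ.ofReal_comp hf (fun x hx => ?_) hfq hR, Wron,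
    deriv_ofReal_comp (hθ.differentiable two_ne_zero)]
  · simp [hθ0, hθ'0]
  · simp [deriv_deriv_ofReal_comp hθ, hθq x hx]

end FundamentalSystem

section Schrodinger

variable {ξ : ℝ} {φ θ : ℝ → ℝ} {f : ℝ → ℂ}

theorem wron_fundamental_system_eq (hφ : ContDiff ℝ 2 φ) (hθ : ContDiff ℝ 2 θ)
    (hf : ContDiff ℝ 2 f)
    (hφθ : ∀ R > (0 : ℝ), -(deriv (deriv φ) R) - 5 * W R ^ 4 * φ R = ξ * φ R ∧
      -(deriv (deriv θ) R) - 5 * W R ^ 4 * θ R = ξ * θ R)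
    (hic : φ 0 = 0 ∧ deriv φ 0 = 1 ∧ θ 0 = 1 ∧ deriv θ 0 = 0)
    (hfode : ∀ R > (0 : ℝ), -(deriv (deriv f) R) - 5 * (W R : ℂ) ^ 4 * f R = (ξ : ℂ) * f R)
    {R : ℝ} (hR : 0 ≤ R) :
    Wron f (fun x => (φ x : ℂ)) R = f 0 ∧ Wron (fun x => (θ x : ℂ)) f R = deriv f 0 := by
  have hfq : ∀ R > 0, deriv (deriv f) R = ((-(5 * W R ^ 4 + ξ) : ℝ) : ℂ) * f R :=
    fun R hR => by push_cast; linear_combination -hfode R hR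
  exact ⟨wron_sine_eq hf hφ hfq (fun R hR => by linear_combination -(hφθ R hR).1) hic.1 hic.2.1 hR,
    wron_cosine_eq hf hθ hfq (fun R hR => by linear_combination -(hφθ R hR).2) hic.2.2.1
      hic.2.2.2 hR⟩

end Schrodinger

section Jost

variable {ξ : ℝ}

theorem osc_zero : osc ξ 0 = 1 := by simp [osc]

theorem norm_osc (R : ℝ) : ‖osc ξ R‖ = 1 := by
  simp [osc, Complex.norm_exp]

theorem osc_ne_zero (R : ℝ) : osc ξ R ≠ 0 := Complex.exp_ne_zero _

theorem hasDerivAt_osc (x : ℝ) : HasDerivAt (osc ξ) (I * √ξ * osc ξ x) x := by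
  have hlin : HasDerivAt (fun R : ℝ => I * ((√ξ * R : ℝ) : ℂ)) (I * √ξ) x := by
    simpa using ((hasDerivAt_id x).const_mul √ξ).ofReal_comp.const_mul I
  exact (hlin.cexp).congr_deriv (mul_comm _ _)

/-- `u` is only determined on `[0, ∞)`, so `deriv u 0` may be a junk value: the bound at `0` is
obtained as a limit from the right. -/
theorem norm_deriv_sub_le_of_eq_osc_mul {f u : ℝ → ℂ} {M : ℝ} (hf : ContDiff ℝ 1 f)
    (hform : ∀ R, 0 ≤ R → f R = osc ξ R * (1 + u R)) (hu : ∀ R > 0, ‖deriv u R‖ ≤ M) :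
    ‖deriv f 0 - I * √ξ * f 0‖ ≤ M := by
  have hpos : ∀ x > 0, ‖deriv f x - I * √ξ * f x‖ ≤ M := by
    intro x hx
    have hux : u =ᶠ[𝓝 x] fun R => f R / osc ξ R - 1 := by
      filter_upwards [Ioi_mem_nhds hx] with R hR
      rw [hform R hR.le, mul_div_cancel_left₀ _ (osc_ne_zero R)]
      ring
    have hdu : deriv u x = (deriv f x - I * √ξ * f x) / osc ξ x := by
      have hquot : HasDerivAt (fun R => f R / osc ξ R - 1)
          ((deriv f x * osc ξ x - f x * (I * √ξ * osc ξ x)) / osc ξ x ^ 2) x :=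
        ((hf.differentiable one_ne_zero x).hasDerivAt.div (hasDerivAt_osc x)
          (osc_ne_zero x)).sub_const 1
      rw [hux.deriv_eq, hquot.deriv]
      field_simp
    simpa [hdu, norm_osc] using hu x hx
  have hcont : Continuous fun x => deriv f x - I * √ξ * f x := by fun_prop
  exact le_of_tendsto ((hcont.tendsto 0).norm.mono_left nhdsWithin_le_nhds)
    (eventually_nhdsWithin_of_forall (s := Ioi 0) hpos)

end Jost

theorem le_mul_of_le_mul_jap_rpow {y C D x p r : ℝ} (hp : p ≤ 0) (hr : 0 ≤ r)
    (hCD : max C 0 ≤ D) (h : y ≤ C * jap x ^ p * r) : y ≤ D * r := by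
  have hjap : 1 ≤ jap x := Real.one_le_sqrt.mpr (le_add_of_nonneg_right (sq_nonneg x))
  have hpow : jap x ^ p ≤ 1 := Real.rpow_le_one_of_one_le_of_nonpos hjap hp
  have hpow₀ : 0 ≤ jap x ^ p := Real.rpow_nonneg (zero_le_one.trans hjap) p
  have hC : C * jap x ^ p ≤ D := by
    rcases le_total 0 C with hC | hC
    · exact (mul_le_of_le_one_right hC hpow).trans ((le_max_left C 0).trans hCD)
    · exact (mul_nonpos_of_nonpos_of_nonneg hC hpow₀).trans ((le_max_right C 0).trans hCD)
  exact h.trans (mul_le_mul_of_nonneg_right hC hr)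

section NormedField

variable {𝕜 : Type*} [NormedField 𝕜] {z : 𝕜}

theorem one_half_le_norm_one_add (hz : ‖z‖ ≤ 1 / 2) : 1 / 2 ≤ ‖1 + z‖ := by
  have := norm_sub_norm_le (1 : 𝕜) (-z)
  rw [norm_one, norm_neg, sub_neg_eq_add] at this
  linarith

theorem one_add_ne_zero_of_norm_le (hz : ‖z‖ ≤ 1 / 2) : 1 + z ≠ 0 :=
  norm_ne_zero_iff.mp (by linarith [one_half_le_norm_one_add hz])

theorem norm_inv_one_add_le_two (hz : ‖z‖ ≤ 1 / 2) : ‖(1 + z)⁻¹‖ ≤ 2 := by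
  rw [norm_inv]
  calc ‖1 + z‖⁻¹ ≤ (1 / 2)⁻¹ := inv_anti₀ (by norm_num) (one_half_le_norm_one_add hz)
    _ = 2 := by norm_num

theorem norm_inv_one_add_sub_one_le (hz : ‖z‖ ≤ 1 / 2) : ‖(1 + z)⁻¹ - 1‖ ≤ 2 * ‖z‖ := by
  have hne := one_add_ne_zero_of_norm_le hz
  have : (1 + z)⁻¹ - 1 = -((1 + z)⁻¹ * z) := by field_simp; ring
  rw [this, norm_neg, norm_mul]
  exact mul_le_mul_of_nonneg_right (norm_inv_one_add_le_two hz) (norm_nonneg z)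

end NormedField

theorem im_inv_mul_eq {w v : ℂ} {s : ℝ} (hw : w ≠ 0) (hs : s ≠ 0) :
    (w⁻¹ * v).im = s * (1 + s⁻¹ * (w⁻¹ * (v - I * s * w)).im) := by
  have : w⁻¹ * v = I * s + w⁻¹ * (v - I * s * w) := by field_simp; ring
  rw [this, add_im, show (I * s).im = s by simp]
  field_simp

theorem abs_inv_mul_im_le {z β : ℂ} {s M : ℝ} (hs : 1 ≤ s) (hz : ‖z‖ ≤ 1 / 2) (hβ : ‖β‖ ≤ M) :
    |s⁻¹ * ((1 + z)⁻¹ * β).im| ≤ 2 * M :=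
  calc |s⁻¹ * ((1 + z)⁻¹ * β).im| ≤ s⁻¹ * (‖(1 + z)⁻¹‖ * ‖β‖) := by
        rw [abs_mul, abs_of_pos (inv_pos.2 (zero_lt_one.trans_le hs)), ← norm_mul]
        gcongr
        exact abs_im_le_norm _
    _ ≤ 1 * (2 * M) := by
        gcongr
        · exact inv_le_one_of_one_le₀ hs
        · exact norm_inv_one_add_le_two hz
    _ = 2 * M := one_mul _


theorem spectral_measure_large_energy_general (ξ₁' : ℝ)
    (φ θ : ℝ → ℝ → ℝ) (f : ℝ → ℝ → ℂ) (b : ℝ → ℝ → ℂ)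
    (hφreg : ∀ ξ : ℝ, ξ₁' ≤ ξ → ContDiff ℝ 2 (φ ξ) ∧ ContDiff ℝ 2 (θ ξ))
    (hφode : ∀ ξ : ℝ, ξ₁' ≤ ξ → ∀ R > (0 : ℝ),
      -(deriv (deriv (φ ξ)) R) - 5 * W R ^ 4 * φ ξ R = ξ * φ ξ R ∧
      -(deriv (deriv (θ ξ)) R) - 5 * W R ^ 4 * θ ξ R = ξ * θ ξ R)
    (hφic : ∀ ξ : ℝ, ξ₁' ≤ ξ →
      φ ξ 0 = 0 ∧ deriv (φ ξ) 0 = 1 ∧ θ ξ 0 = 1 ∧ deriv (θ ξ) 0 = 0)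
    (hfreg : ∀ ξ : ℝ, ξ₁' ≤ ξ → ContDiff ℝ 2 (f ξ))
    (hfode : ∀ ξ : ℝ, ξ₁' ≤ ξ → ∀ R > (0 : ℝ),
      -(deriv (deriv (f ξ)) R) - 5 * (W R : ℂ) ^ 4 * f ξ R = (ξ : ℂ) * f ξ R)
    (hform : ∀ ξ : ℝ, ξ₁' ≤ ξ → ∀ R : ℝ, 0 ≤ R → f ξ R = osc ξ R * (1 + b R ξ))
    (hb : ∀ k l : ℕ, ∃ C : ℝ, ∀ ξ : ℝ, ξ₁' ≤ ξ → ∀ R : ℝ, 0 ≤ R →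
      ‖iteratedDeriv l (fun ξ' => iteratedDeriv k (fun R' => b R' ξ') R) ξ‖
        ≤ C * jap R ^ (-(3 : ℝ) - (k : ℝ)) * ξ ^ (-(1 : ℝ) / 2 - (l : ℝ))) :
    ∃ ξ₁ : ℝ, ξ₁' ≤ ξ₁ ∧ ∃ C > (0 : ℝ), ∃ E₁ : ℝ → ℂ, ∃ E₂ : ℝ → ℝ,
      ∀ ξ : ℝ, ξ₁ ≤ ξ →
        -- `c₀(ξ) = 1/W(f₊,φ) = 1 + O(ξ^{-1/2})`
        (∀ R > (0 : ℝ),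
          (Wron (f ξ) (fun R' => ((φ ξ R' : ℝ) : ℂ)) R)⁻¹ = 1 + E₁ ξ) ∧
        ‖E₁ ξ‖ ≤ C * ξ ^ (-(1 : ℝ) / 2) ∧
        -- `ρ(ξ) = (1/π) Im[c₀(ξ) W(θ,f₊)] = (1/π) ξ^{1/2}(1+O(ξ^{-1/2}))`
        (∀ R > (0 : ℝ),
          (1 / π) * ((Wron (f ξ) (fun R' => ((φ ξ R' : ℝ) : ℂ)) 1)⁻¹
              * Wron (fun R' => ((θ ξ R' : ℝ) : ℂ)) (f ξ) R).im
            = (1 / π) * ξ ^ ((1 : ℝ) / 2) * (1 + E₂ ξ)) ∧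
        |E₂ ξ| ≤ C * ξ ^ (-(1 : ℝ) / 2) := by
  obtain ⟨C₀, hC₀⟩ := hb 0 0
  obtain ⟨C₁, hC₁⟩ := hb 1 0
  simp only [iteratedDeriv_zero, iteratedDeriv_one, Nat.cast_zero, Nat.cast_one, sub_zero]
    at hC₀ hC₁
  set D := max (max C₀ C₁) 1
  refine ⟨max ξ₁' (4 * D ^ 2), le_max_left _ _, 2 * D, by positivity,
    fun ξ => (1 + b 0 ξ)⁻¹ - 1,
    fun ξ => (√ξ)⁻¹ * ((1 + b 0 ξ)⁻¹ * (deriv (f ξ) 0 - I * √ξ * f ξ 0)).im, fun ξ hξ => ?_⟩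
  have hξ' : ξ₁' ≤ ξ := (le_max_left _ _).trans hξ
  have hsD : 2 * D ≤ √ξ :=
    (Real.le_sqrt' (by positivity)).2 (by linarith [le_max_right ξ₁' (4 * D ^ 2)])
  have hs : 1 ≤ √ξ := by linarith [le_max_right (max C₀ C₁) 1]
  have hrpow : ξ ^ (-(1 : ℝ) / 2) = (√ξ)⁻¹ := by
    rw [neg_div, Real.rpow_neg (Real.sqrt_pos.mp (by positivity)).le, ← Real.sqrt_eq_rpow]
  beta_reduce
  rw [hrpow, ← Real.sqrt_eq_rpow]
  have hf0 : f ξ 0 = 1 + b 0 ξ := by simpa [osc_zero] using hform ξ hξ' 0 le_rfl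
  have hb0 : ‖b 0 ξ‖ ≤ D * (√ξ)⁻¹ :=
    le_mul_of_le_mul_jap_rpow (by norm_num) (by positivity)
      (max_le_max (le_max_left _ _) zero_le_one) (hrpow ▸ hC₀ ξ hξ' 0 le_rfl)
  have hβ : ‖deriv (f ξ) 0 - I * √ξ * f ξ 0‖ ≤ D * (√ξ)⁻¹ :=
    norm_deriv_sub_le_of_eq_osc_mul ((hfreg ξ hξ').of_le one_le_two) (hform ξ hξ') fun R hR =>
      le_mul_of_le_mul_jap_rpow (by norm_num) (by positivity)
        (max_le_max (le_max_right _ _) zero_le_one) (hrpow ▸ hC₁ ξ hξ' R hR.le)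
  have hhalf : ‖b 0 ξ‖ ≤ 1 / 2 :=
    hb0.trans (by rw [← div_eq_mul_inv, div_le_iff₀ (by positivity)]; linarith)
  have hW := fun R (hR : 0 < R) => wron_fundamental_system_eq (hφreg ξ hξ').1 (hφreg ξ hξ').2
    (hfreg ξ hξ') (hφode ξ hξ') (hφic ξ hξ') (hfode ξ hξ') hR.le
  refine ⟨fun R hR => by rw [(hW R hR).1, hf0]; ring,
    (norm_inv_one_add_sub_one_le hhalf).trans (by linarith), fun R hR => ?_,
    (abs_inv_mul_im_le hs hhalf hβ).trans_eq (mul_assoc _ _ _).symm⟩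
  rw [(hW 1 one_pos).1, (hW R hR).2,
    im_inv_mul_eq (s := √ξ) (hf0 ▸ one_add_ne_zero_of_norm_le hhalf) (by positivity), hf0]
  ring

/-- **Lemma 3.6**: asymptotics of the spectral measure as `ξ → ∞`.
If `φ(·,ξ), θ(·,ξ)` are the fundamental system of `-f'' - 5W⁴f = ξf` normalized at `R = 0`
and `f₊(·,ξ)` is the large-energy Jost function `e^{i√ξR}(1 + b(R,ξ))` on `[0,∞)`, then
`c₀(ξ) = 1/W(f₊(·,ξ),φ(·,ξ)) = 1 + O(ξ^{-1/2})` and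
`ρ(ξ) = (1/π)Im[c₀(ξ)W(θ(·,ξ),f₊(·,ξ))] = (1/π)ξ^{1/2}(1+O(ξ^{-1/2}))`. -/
theorem spectral_measure_large_energy (ξ₁' : ℝ) (hξ₁' : 0 < ξ₁')
    (φ θ : ℝ → ℝ → ℝ) (f : ℝ → ℝ → ℂ) (b : ℝ → ℝ → ℂ)
    (hφreg : ∀ ξ : ℝ, ξ₁' ≤ ξ → ContDiff ℝ 2 (φ ξ) ∧ ContDiff ℝ 2 (θ ξ))
    (hφode : ∀ ξ : ℝ, ξ₁' ≤ ξ → ∀ R > (0 : ℝ),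
      -(deriv (deriv (φ ξ)) R) - 5 * W R ^ 4 * φ ξ R = ξ * φ ξ R ∧
      -(deriv (deriv (θ ξ)) R) - 5 * W R ^ 4 * θ ξ R = ξ * θ ξ R)
    (hφic : ∀ ξ : ℝ, ξ₁' ≤ ξ →
      φ ξ 0 = 0 ∧ deriv (φ ξ) 0 = 1 ∧ θ ξ 0 = 1 ∧ deriv (θ ξ) 0 = 0)
    (hfreg : ∀ ξ : ℝ, ξ₁' ≤ ξ → ContDiff ℝ 2 (f ξ))
    (hfode : ∀ ξ : ℝ, ξ₁' ≤ ξ → ∀ R > (0 : ℝ),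
      -(deriv (deriv (f ξ)) R) - 5 * (W R : ℂ) ^ 4 * f ξ R = (ξ : ℂ) * f ξ R)
    (hform : ∀ ξ : ℝ, ξ₁' ≤ ξ → ∀ R : ℝ, 0 ≤ R → f ξ R = osc ξ R * (1 + b R ξ))
    (hb : ∀ k l : ℕ, ∃ C : ℝ, ∀ ξ : ℝ, ξ₁' ≤ ξ → ∀ R : ℝ, 0 ≤ R →
      ‖iteratedDeriv l (fun ξ' => iteratedDeriv k (fun R' => b R' ξ') R) ξ‖
        ≤ C * jap R ^ (-(3 : ℝ) - (k : ℝ)) * ξ ^ (-(1 : ℝ) / 2 - (l : ℝ))) :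
    ∃ ξ₁ : ℝ, ξ₁' ≤ ξ₁ ∧ ∃ C > (0 : ℝ), ∃ E₁ : ℝ → ℂ, ∃ E₂ : ℝ → ℝ,
      ∀ ξ : ℝ, ξ₁ ≤ ξ →
        -- `c₀(ξ) = 1/W(f₊,φ) = 1 + O(ξ^{-1/2})`
        (∀ R > (0 : ℝ),
          (Wron (f ξ) (fun R' => ((φ ξ R' : ℝ) : ℂ)) R)⁻¹ = 1 + E₁ ξ) ∧
        ‖E₁ ξ‖ ≤ C * ξ ^ (-(1 : ℝ) / 2) ∧
        -- `ρ(ξ) = (1/π) Im[c₀(ξ) W(θ,f₊)] = (1/π) ξ^{1/2}(1+O(ξ^{-1/2}))`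
        (∀ R > (0 : ℝ),
          (1 / π) * ((Wron (f ξ) (fun R' => ((φ ξ R' : ℝ) : ℂ)) 1)⁻¹
              * Wron (fun R' => ((θ ξ R' : ℝ) : ℂ)) (f ξ) R).im
            = (1 / π) * ξ ^ ((1 : ℝ) / 2) * (1 + E₂ ξ)) ∧
        |E₂ ξ| ≤ C * ξ ^ (-(1 : ℝ) / 2) :=
  spectral_measure_large_energy_general ξ₁' φ θ f b hφreg hφode hφic hfreg hfode hform hb

end
end
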